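/- Let A(∂) ∈ gl(I)⊗V((∂^{-1})) be a monic matrix pseudo-differential operator of order N ≥ 1, with respect to the ∘-product (a⊗v)∘(b⊗w)=(-1)^{|b||v|}ab⊗vw. Then there exists a unique matrix pseudo-differential operator A^{1/N}(∂) which is monic of order 1 and satisfies (A^{1/N})^{∘N} = A. -/
import Mathlib


noncomputable section

/-- A differential superalgebra: a `ℤ/2`-graded associative unital `ℂ`-algebra,
supercommutative, with an even derivation `D`. -/
class DiffSuperAlg (V : Type*) extends Ring V, Algebra ℂ V where
  grading : ZMod 2 → Submodule ℂ V
  gradedAlgebra : GradedAlgebra grading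
  D : V → V
  superComm : ∀ (i j : ZMod 2), ∀ a ∈ grading i, ∀ b ∈ grading j,
      a * b = ((-1 : ℂ) ^ (i.val * j.val)) • (b * a)
  D_add : ∀ a b, D (a + b) = D a + D b
  D_smul : ∀ (c : ℂ) (a : V), D (c • a) = c • D a
  D_mul : ∀ a b, D (a * b) = D a * b + a * D b
  D_even : ∀ (i : ZMod 2), ∀ a ∈ grading i, D a ∈ grading i

namespace PDO

variable {V : Type*} [DiffSuperAlg V]

/-- Iterated derivation `∂ⁿ`. -/
def Dit (n : ℕ) : V → V := (DiffSuperAlg.D (V := V))^[n]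

/-- Generalized binomial coefficient `C(k, n)` for `k ∈ ℤ`. -/
def cchoose (k : ℤ) (n : ℕ) : ℂ :=
  (∏ i ∈ Finset.range n, ((k : ℂ) - (i : ℂ))) / (n.factorial : ℂ)

/-- Sign `(-1)^x` of a parity `x ∈ ℤ/2`. -/
def sgn (x : ZMod 2) : ℂ := (-1 : ℂ) ^ x.val

/-- A formal series `Σₖ (f k) ∂ᵏ` is an honest pseudo-differential operator when its
support is bounded above. -/
def IsPDO (f : ℤ → V) : Prop := ∃ N : ℤ, ∀ k : ℤ, N < k → f k = 0

/-- `f` is monic of order `N`. -/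
def IsMonic (f : ℤ → V) (N : ℤ) : Prop :=
  f N = 1 ∧ ∀ k : ℤ, N < k → f k = 0

/-- `f` is a differential operator of order at most `N`. -/
def IsDiffOpLE (f : ℤ → V) (N : ℕ) : Prop := ∀ k : ℤ, f k ≠ 0 → 0 ≤ k ∧ k ≤ (N : ℤ)

/-- All coefficients of `f` are homogeneous of parity `π`. -/
def IsHomog (f : ℤ → V) (π : ZMod 2) : Prop :=
  ∀ k : ℤ, f k ∈ DiffSuperAlg.grading (V := V) π

/-- The product of pseudo-differential operators, obtained from the rule
`∂ᵏ v = Σₙ C(k,n) v⁽ⁿ⁾ ∂^(k-n)`. -/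
def pmul (f g : ℤ → V) : ℤ → V := fun m =>
  ∑ᶠ (k : ℤ) (j : ℤ) (n : ℕ),
    if m = k + j - (n : ℤ) then cchoose k n • (f k * Dit n (g j)) else 0

/-- The identity operator. -/
def one : ℤ → V := fun m => if m = 0 then 1 else 0

/-- The operator `∂^e`. -/
def del (e : ℤ) : ℤ → V := fun m => if m = e then 1 else 0

/-- The adjoint `A*(∂) = Σₖ (-∂)ᵏ aₖ`, coefficientwise. -/
def adj (f : ℤ → V) : ℤ → V := fun m =>
  ∑ᶠ n : ℕ, ((-1 : ℂ) ^ (m + (n : ℤ)) * cchoose (m + n) n) • Dit n (f (m + n))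

/-- The residue `Res A = a₋₁`. -/
def res (f : ℤ → V) : V := f (-1)

/-- The differential part `A₊`. -/
def dplus (f : ℤ → V) : ℤ → V := fun k => if 0 ≤ k then f k else 0

/-- Coefficient of `z^m` in `A(z+∂)(B(z))`, where `(z+∂)⁻¹` is expanded as
`Σₙ (-1)ⁿ z^(-n-1) ∂ⁿ` (i.e. via the generalized binomial coefficients). -/
def symbolSub (f g : ℤ → V) : ℤ → V := fun m =>
  ∑ᶠ (k : ℤ) (n : ℕ), cchoose k n • (f k * Dit n (g (m - k + n)))

/-- Coefficientwise derivation on `V[λ]`. -/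
def Dp (P : Polynomial V) : Polynomial V :=
  P.sum fun n c => Polynomial.C (DiffSuperAlg.D c) * Polynomial.X ^ n

/-- Iterated coefficientwise derivation on `V[λ]`. -/
def DpIt (n : ℕ) : Polynomial V → Polynomial V := (Dp (V := V))^[n]

/-- Coefficient of `w^j` in `(w+λ+∂)ⁿ (G(w))`, where `G(w) = Σ_q g_q w^q`. -/
def expW (n : ℕ) (g : ℤ → V) (j : ℤ) : Polynomial V :=
  ∑ᶠ (m : ℕ) (α : ℕ), if m + α ≤ n then
    (((n.choose m) * ((n - m).choose α) : ℕ) : ℂ) •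
      ((Polynomial.X : Polynomial V) ^ (n - m - α) * Polynomial.C (Dit m (g (j - (α : ℤ)))))
  else 0

/-- Coefficient of `z^i w^j` in `A(z) ι_z(z-w-λ-∂)⁻¹ (B(w))`. -/
def iotaTermB (f g : ℤ → V) (i j : ℤ) : Polynomial V :=
  ∑ᶠ n : ℕ, Polynomial.C (f (i + n + 1)) * expW n g j

/-- `A(w+λ+∂)` applied to `P ∈ V[λ]`: coefficient of `w^j`. -/
def appW (f : ℤ → V) (P : Polynomial V) (j : ℤ) : Polynomial V :=
  ∑ᶠ (n : ℕ) (β : ℕ),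
    (cchoose (j + n + β) n * cchoose (j + β) β) •
      ((Polynomial.X : Polynomial V) ^ β * (Polynomial.C (f (j + n + β)) * DpIt n P))

/-- Symbol of the adjoint `A*` at `λ - z` (expanded for large `|z|`):
coefficient of `z^i`, as an element of `V[λ]`. -/
def adjSymb (g : ℤ → V) (i : ℤ) : Polynomial V :=
  ∑ᶠ β : ℕ, ((-1 : ℂ) ^ i * cchoose (i + β) β) •
    ((Polynomial.X : Polynomial V) ^ β * Polynomial.C (adj g (i + β)))

/-- Coefficient of `z^i w^j` in `A(w+λ+∂) ι_z(z-w-λ-∂)⁻¹ ((B)*(λ-z))`. -/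
def iotaTermA (f g : ℤ → V) (i j : ℤ) : Polynomial V :=
  ∑ᶠ n : ℕ, appW (fun k => f (k - n)) (adjSymb g (i + n + 1)) j

/-- Coefficient of `z^i w^j` of the right-hand side
`A(w+λ+∂) ι_z(z-w-λ-∂)⁻¹ (B*)(λ-z) - A(z) ι_z(z-w-λ-∂)⁻¹ B(w)`
of the super Adler identity, for the entries `f = A_{hj}` and `g = A_{ik}`. -/
def adlerRHS (f g : ℤ → V) (i j : ℤ) : Polynomial V :=
  iotaTermA f g i j - iotaTermB f g i j

/-- Coefficient of `w^j` in `A(w+λ)`. -/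
def symbLam (f : ℤ → V) (j : ℤ) : Polynomial V :=
  ∑ᶠ β : ℕ, cchoose (j + β) β •
    ((Polynomial.X : Polynomial V) ^ β * Polynomial.C (f (j + β)))

variable {I : Type*} [Fintype I] [DecidableEq I]

/-- The super Adler-type operator property of a matrix pseudo-differential operator,
with respect to a λ-bracket `Br` and the parity function `p` on the index set. -/
def IsSATO (p : I → ZMod 2) (Br : V → V → Polynomial V) (A : I → I → ℤ → V) : Prop :=
  ∀ i j h k : I, ∀ zp wp : ℤ,
    Br (A i j zp) (A h k wp) =
      sgn (p i * p j + p i * p h + p j * p h) • adlerRHS (A h j) (A i k) zp wp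

/-- Homogeneous component of parity `π` of an element of `V`. -/
def gpart (π : ZMod 2) (v : V) : V :=
  letI := DiffSuperAlg.gradedAlgebra (V := V)
  ((DirectSum.decompose (DiffSuperAlg.grading (V := V)) v) π : V)

/-- The `∘`-product `(a⊗v)∘(b⊗w) = (-1)^(|b||v|) ab⊗vw` on matrix pseudo-differential
operators. -/
def circMul (p : I → ZMod 2) (M N : I → I → ℤ → V) : I → I → ℤ → V :=
  fun i j m => ∑ t : I, ∑ π : ZMod 2,
    sgn ((p t + p j) * π) • pmul (fun k => gpart π (M i t k)) (N t j) m

/-- The `⋆`-product `(a⊗v)⋆(b⊗w) = (-1)^(|b||v|+|a||b|) ab⊗vw` on matrix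
pseudo-differential operators. -/
def starMul (p : I → ZMod 2) (M N : I → I → ℤ → V) : I → I → ℤ → V :=
  fun i j m => ∑ t : I, ∑ π : ZMod 2,
    sgn ((p t + p j) * π + (p i + p t) * (p t + p j)) •
      pmul (fun k => gpart π (M i t k)) (N t j) m

/-- The identity matrix operator `𝟙_I`. -/
def idMat : I → I → ℤ → V := fun i j m => if i = j ∧ m = 0 then 1 else 0

/-- `M` is a monic matrix (pseudo-)differential operator of order `N`. -/
def IsMonicMat (M : I → I → ℤ → V) (N : ℤ) : Prop :=
  (∀ i j : I, M i j N = if i = j then (1 : V) else 0) ∧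
  (∀ i j : I, ∀ k : ℤ, N < k → M i j k = 0)

/-- `∘`-powers of a matrix pseudo-differential operator. -/
def circPow (p : I → ZMod 2) (M : I → I → ℤ → V) : ℕ → I → I → ℤ → V
  | 0 => idMat
  | n + 1 => circMul p M (circPow p M n)

/-- Matrix-wise differential part. -/
def dplusMat (M : I → I → ℤ → V) : I → I → ℤ → V := fun i j => dplus (M i j)

/-- `Res str M`, the supertrace of the residue. -/
def strRes (p : I → ZMod 2) (M : I → I → ℤ → V) : V :=
  ∑ i : I, sgn (p i) • res (M i i)

/-- `{a_(λ+∂) c}_→ b`, i.e. `Σₙ (a₍ₙ₎c) (λ+∂)ⁿ b` for `P = {a_λ c}`. -/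
def lamShift (P : Polynomial V) (b : V) : Polynomial V :=
  ∑ᶠ (n : ℕ) (m : ℕ), if m ≤ n then ((n.choose m : ℕ) : ℂ) •
    ((Polynomial.X : Polynomial V) ^ (n - m) * Polynomial.C (P.coeff n * Dit m b)) else 0

/-- `{b_(-λ-∂) a}` computed from `P = {b_λ a}`. -/
def negLam (P : Polynomial V) : Polynomial V :=
  ∑ᶠ (n : ℕ) (m : ℕ), if m ≤ n then (((n.choose m : ℕ) : ℂ) * (-1 : ℂ) ^ n) •
    ((Polynomial.X : Polynomial V) ^ (n - m) * Polynomial.C (Dit m (P.coeff n))) else 0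

end PDO

/-- A λ-bracket on a differential superalgebra: even, bilinear, sesquilinear,
satisfying the left and right Leibniz rules. -/
structure LambdaBracket (V : Type*) [DiffSuperAlg V] where
  br : V → V → Polynomial V
  add_left : ∀ a b c : V, br (a + b) c = br a c + br b c
  add_right : ∀ a b c : V, br a (b + c) = br a b + br a c
  smul_left : ∀ (r : ℂ) (a b : V), br (r • a) b = r • br a b
  smul_right : ∀ (r : ℂ) (a b : V), br a (r • b) = r • br a b
  even : ∀ (i j : ZMod 2), ∀ a ∈ DiffSuperAlg.grading (V := V) i,
      ∀ b ∈ DiffSuperAlg.grading (V := V) j, ∀ n : ℕ,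
      (br a b).coeff n ∈ DiffSuperAlg.grading (V := V) (i + j)
  sesq_left : ∀ a b : V, br (DiffSuperAlg.D a) b = -(Polynomial.X * br a b)
  sesq_right : ∀ a b : V,
      br a (DiffSuperAlg.D b) = Polynomial.X * br a b + PDO.Dp (br a b)
  leibniz_left : ∀ (i j : ZMod 2), ∀ a ∈ DiffSuperAlg.grading (V := V) i,
      ∀ b ∈ DiffSuperAlg.grading (V := V) j, ∀ c : V,
      br a (b * c) = br a b * Polynomial.C c + PDO.sgn (i * j) • (Polynomial.C b * br a c)
  leibniz_right : ∀ (i j k : ZMod 2), ∀ a ∈ DiffSuperAlg.grading (V := V) i,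
      ∀ b ∈ DiffSuperAlg.grading (V := V) j, ∀ c ∈ DiffSuperAlg.grading (V := V) k,
      br (a * b) c =
        PDO.sgn (j * k) • PDO.lamShift (br a c) b +
        PDO.sgn (i * (j + k)) • PDO.lamShift (br b c) a

namespace PDO

variable {V : Type*} [DiffSuperAlg V]

/-- Skew-symmetry axiom: `{a_λ b} = -(-1)^(|a||b|) {b_(-λ-∂) a}`. -/
def SkewSymm (B : LambdaBracket V) : Prop :=
  ∀ (i j : ZMod 2), ∀ a ∈ DiffSuperAlg.grading (V := V) i,
    ∀ b ∈ DiffSuperAlg.grading (V := V) j,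
    B.br a b = -(sgn (i * j) • negLam (B.br b a))

/-- Coefficient of `λ^l μ^m` in `{{a_λ b}_(λ+μ) c}`. -/
def jacComp (B : LambdaBracket V) (a b c : V) (l m : ℕ) : V :=
  ∑ᶠ n : ℕ, if n ≤ l then
    (((l - n + m).choose m : ℕ) : ℂ) • (B.br ((B.br a b).coeff n) c).coeff (l - n + m)
  else 0

/-- Jacobi identity: `{a_λ {b_μ c}} = {{a_λ b}_(λ+μ) c} + (-1)^(|a||b|) {b_μ {a_λ c}}`,
written on the coefficient of `λ^l μ^m`. -/
def Jacobi (B : LambdaBracket V) : Prop :=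
  ∀ (i j : ZMod 2), ∀ a ∈ DiffSuperAlg.grading (V := V) i,
    ∀ b ∈ DiffSuperAlg.grading (V := V) j, ∀ c : V, ∀ l m : ℕ,
    (B.br a ((B.br b c).coeff m)).coeff l =
      jacComp B a b c l m + sgn (i * j) • (B.br b ((B.br a c).coeff l)).coeff m

/-- The family `u` differentially generates `V`. -/
def diffGen (u : Set V) : Prop :=
  Algebra.adjoin ℂ {x : V | ∃ v ∈ u, ∃ n : ℕ, x = Dit n v} = ⊤

end PDO

namespace PDO

variable {V : Type*} [DiffSuperAlg V]

lemma Dit_zero (n : ℕ) : Dit (V := V) n 0 = 0 := by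
  induction n with
  | zero => rfl
  | succ n ih =>
    show (DiffSuperAlg.D (V := V))^[n+1] 0 = 0
    rw [Function.iterate_succ_apply']
    show DiffSuperAlg.D (Dit n (0:V)) = 0
    rw [ih]
    have h0 := DiffSuperAlg.D_add (V := V) 0 0
    simpa using h0

lemma Dit_add (n : ℕ) (a b : V) : Dit n (a + b) = Dit n a + Dit n b := by
  induction n with
  | zero => rfl
  | succ n ih =>
    show (DiffSuperAlg.D (V := V))^[n+1] (a+b) = (DiffSuperAlg.D (V := V))^[n+1] a + (DiffSuperAlg.D (V := V))^[n+1] b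
    rw [Function.iterate_succ_apply', Function.iterate_succ_apply', Function.iterate_succ_apply']
    show DiffSuperAlg.D (Dit n (a+b)) = DiffSuperAlg.D (Dit n a) + DiffSuperAlg.D (Dit n b)
    rw [ih]
    exact DiffSuperAlg.D_add _ _

lemma cchoose_zero (k : ℤ) : cchoose k 0 = 1 := by
  simp [cchoose]

/-- coefficientwise bound for scalar symbols -/
def Bd (f : ℤ → V) (a : ℤ) : Prop := ∀ k : ℤ, a < k → f k = 0

lemma pmul_eq {f g : ℤ → V} {a b : ℤ} (hf : Bd f a) (hg : Bd g b) (m : ℤ) :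
    pmul f g m = ∑ k ∈ Finset.Icc (m - b) a, ∑ j ∈ Finset.Icc (m - k) b,
      cchoose k ((k + j - m).toNat) • (f k * Dit ((k + j - m).toNat) (g j)) := by
  have hinner : ∀ k j : ℤ,
      (∑ᶠ n : ℕ, if m = k + j - (n : ℤ) then cchoose k n • (f k * Dit n (g j)) else 0)
      = if m ≤ k + j then
          cchoose k ((k + j - m).toNat) • (f k * Dit ((k + j - m).toNat) (g j)) else 0 := by
    intro k j
    by_cases h : m ≤ k + j
    · rw [if_pos h, finsum_eq_single _ ((k + j - m).toNat), if_pos (by omega)]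
      intro x hx
      have hc : ¬ (m = k + j - (x : ℤ)) := by omega
      rw [if_neg hc]
    · rw [if_neg h]
      refine finsum_eq_zero_of_forall_eq_zero fun x => ?_
      have hc : ¬ (m = k + j - (x : ℤ)) := by omega
      rw [if_neg hc]
  have hmid : ∀ k : ℤ,
      (∑ᶠ j : ℤ, ∑ᶠ n : ℕ, if m = k + j - (n : ℤ) then cchoose k n • (f k * Dit n (g j)) else 0)
      = ∑ j ∈ Finset.Icc (m - k) b,
          (if m ≤ k + j then
            cchoose k ((k + j - m).toNat) • (f k * Dit ((k + j - m).toNat) (g j)) else 0) := by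
    intro k
    rw [finsum_congr (hinner k)]
    refine finsum_eq_finset_sum_of_support_subset _ ?_
    intro j hj
    simp only [Function.mem_support] at hj
    simp only [Finset.coe_Icc, Set.mem_Icc]
    constructor
    · by_contra hlt
      exact hj (if_neg (by omega))
    · by_contra hgt
      push_neg at hgt
      apply hj
      rw [hg j hgt, Dit_zero, mul_zero, smul_zero, ite_self]
  show (∑ᶠ (k : ℤ) (j : ℤ) (n : ℕ), _) = _
  rw [finsum_congr hmid]
  have hsupp : (Function.support fun k : ℤ => ∑ j ∈ Finset.Icc (m - k) b,
      (if m ≤ k + j then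
        cchoose k ((k + j - m).toNat) • (f k * Dit ((k + j - m).toNat) (g j)) else 0)) ⊆
      (Finset.Icc (m - b) a : Set ℤ) := by
    intro k hk
    simp only [Function.mem_support] at hk
    simp only [Finset.coe_Icc, Set.mem_Icc]
    constructor
    · by_contra hlt
      push_neg at hlt
      apply hk
      rw [Finset.Icc_eq_empty (by omega), Finset.sum_empty]
    · by_contra hgt
      push_neg at hgt
      apply hk
      refine Finset.sum_eq_zero fun j _ => ?_
      rw [hf k hgt, zero_mul, smul_zero, ite_self]
  rw [finsum_eq_finset_sum_of_support_subset _ hsupp]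
  refine Finset.sum_congr rfl fun k _ => Finset.sum_congr rfl fun j hj => ?_
  rw [if_pos]
  simp only [Finset.mem_Icc] at hj
  omega

lemma pmul_bd {f g : ℤ → V} {a b : ℤ} (hf : Bd f a) (hg : Bd g b) {m : ℤ}
    (h : a + b < m) : pmul f g m = 0 := by
  rw [pmul_eq hf hg, Finset.Icc_eq_empty (by omega), Finset.sum_empty]

lemma pmul_top {f g : ℤ → V} {a b : ℤ} (hf : Bd f a) (hg : Bd g b) :
    pmul f g (a + b) = f a * g b := by
  rw [pmul_eq hf hg]
  have e1 : Finset.Icc (a + b - b) a = {a} := by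
    rw [show a + b - b = a by ring, Finset.Icc_self]
  rw [e1, Finset.sum_singleton]
  have e2 : Finset.Icc (a + b - a) b = {b} := by
    rw [show a + b - a = b by ring, Finset.Icc_self]
  rw [e2, Finset.sum_singleton]
  have e3 : (a + b - (a + b)).toNat = 0 := by omega
  rw [e3, cchoose_zero, one_smul]
  rfl

lemma pmul_add_left {f1 f2 g : ℤ → V} {a b : ℤ} (h1 : Bd f1 a) (h2 : Bd f2 a)
    (hg : Bd g b) (m : ℤ) :
    pmul (fun k => f1 k + f2 k) g m = pmul f1 g m + pmul f2 g m := by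
  have h12 : Bd (fun k => f1 k + f2 k) a := fun k hk => by
    simp [h1 k hk, h2 k hk]
  rw [pmul_eq h12 hg, pmul_eq h1 hg, pmul_eq h2 hg, ← Finset.sum_add_distrib]
  refine Finset.sum_congr rfl fun k _ => ?_
  rw [← Finset.sum_add_distrib]
  refine Finset.sum_congr rfl fun j _ => ?_
  rw [add_mul, smul_add]

lemma pmul_add_right {f g1 g2 : ℤ → V} {a b : ℤ} (hf : Bd f a) (h1 : Bd g1 b)
    (h2 : Bd g2 b) (m : ℤ) :
    pmul f (fun k => g1 k + g2 k) m = pmul f g1 m + pmul f g2 m := by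
  have h12 : Bd (fun k => g1 k + g2 k) b := fun k hk => by
    simp [h1 k hk, h2 k hk]
  rw [pmul_eq hf h12, pmul_eq hf h1, pmul_eq hf h2, ← Finset.sum_add_distrib]
  refine Finset.sum_congr rfl fun k _ => ?_
  rw [← Finset.sum_add_distrib]
  refine Finset.sum_congr rfl fun j _ => ?_
  rw [Dit_add, mul_add, smul_add]

end PDO
namespace PDO

variable {V : Type*} [DiffSuperAlg V]

lemma sgn_zero : sgn 0 = 1 := by
  have : (0 : ZMod 2).val = 0 := rfl
  simp [sgn, this]

lemma zmod2_add_self (x : ZMod 2) : x + x = 0 := by revert x; decide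

lemma gpart_add (π : ZMod 2) (a b : V) : gpart π (a + b) = gpart π a + gpart π b := by
  letI := DiffSuperAlg.gradedAlgebra (V := V)
  show ((DirectSum.decompose (DiffSuperAlg.grading (V := V)) (a + b)) π : V) = _
  rw [DirectSum.decompose_add]
  rfl

lemma gpart_zero (π : ZMod 2) : gpart π (0 : V) = 0 := by
  letI := DiffSuperAlg.gradedAlgebra (V := V)
  show ((DirectSum.decompose (DiffSuperAlg.grading (V := V)) (0 : V)) π : V) = 0
  rw [DirectSum.decompose_zero]
  rfl

lemma gpart_one (π : ZMod 2) : gpart π (1 : V) = if π = 0 then 1 else 0 := by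
  letI := DiffSuperAlg.gradedAlgebra (V := V)
  have h1 : (1 : V) ∈ DiffSuperAlg.grading (V := V) 0 := SetLike.one_mem_graded _
  by_cases hπ : π = 0
  · subst hπ
    rw [if_pos rfl]
    exact DirectSum.decompose_of_mem_same _ h1
  · rw [if_neg hπ]
    exact DirectSum.decompose_of_mem_ne _ h1 (Ne.symm hπ)

lemma gpart_sum (v : V) : ∑ π : ZMod 2, gpart π v = v := by
  classical
  letI := DiffSuperAlg.gradedAlgebra (V := V)
  have h := DirectSum.sum_support_decompose (DiffSuperAlg.grading (V := V)) v
  calc ∑ π : ZMod 2, gpart π v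
      = ∑ π ∈ (DirectSum.decompose (DiffSuperAlg.grading (V := V)) v).support,
          ((DirectSum.decompose (DiffSuperAlg.grading (V := V)) v) π : V) := by
        refine (Finset.sum_subset (Finset.subset_univ _) fun x _ hx => ?_).symm
        show ((DirectSum.decompose (DiffSuperAlg.grading (V := V)) v) x : V) = 0
        rw [DFinsupp.notMem_support_iff.mp hx]
        rfl
    _ = v := h

variable {I : Type*} [Fintype I] [DecidableEq I]

/-- coefficientwise bound for matrix symbols -/
def MBd (F : I → I → ℤ → V) (a : ℤ) : Prop := ∀ i j : I, ∀ k : ℤ, a < k → F i j k = 0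

omit [Fintype I] [DecidableEq I] in
lemma MBd.mono {F : I → I → ℤ → V} {a a' : ℤ} (h : MBd F a) (ha : a ≤ a') : MBd F a' :=
  fun i j k hk => h i j k (by omega)

omit [Fintype I] [DecidableEq I] in
lemma MBd.gpartBd {F : I → I → ℤ → V} {a : ℤ} (h : MBd F a) (π : ZMod 2) (i t : I) :
    Bd (fun k => gpart π (F i t k)) a := fun k hk => by
  show gpart π (F i t k) = 0
  rw [h i t k hk, gpart_zero]

lemma circMul_bd {F G : I → I → ℤ → V} {a b : ℤ} (p : I → ZMod 2)
    (hF : MBd F a) (hG : MBd G b) {i j : I} {m : ℤ} (h : a + b < m) :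
    circMul p F G i j m = 0 := by
  unfold circMul
  refine Finset.sum_eq_zero fun t _ => Finset.sum_eq_zero fun π _ => ?_
  rw [pmul_bd (hF.gpartBd π i t) (fun k hk => hG t j k hk) h, smul_zero]

lemma circMul_top {F G : I → I → ℤ → V} {a b : ℤ} (p : I → ZMod 2)
    (hF : MBd F a) (hG : MBd G b) (i j : I) :
    circMul p F G i j (a + b) =
      ∑ t : I, ∑ π : ZMod 2, sgn ((p t + p j) * π) • (gpart π (F i t a) * G t j b) := by
  unfold circMul
  refine Finset.sum_congr rfl fun t _ => Finset.sum_congr rfl fun π _ => ?_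
  rw [pmul_top (hF.gpartBd π i t) (fun k hk => hG t j k hk)]

lemma circMul_top_left {F G : I → I → ℤ → V} {a b : ℤ} (p : I → ZMod 2)
    (hF : MBd F a) (hG : MBd G b) (hTop : ∀ i t : I, F i t a = if i = t then 1 else 0)
    (i j : I) : circMul p F G i j (a + b) = G i j b := by
  rw [circMul_top p hF hG i j]
  rw [Finset.sum_eq_single_of_mem i (Finset.mem_univ i)]
  · rw [hTop i i, if_pos rfl]
    rw [Finset.sum_eq_single_of_mem (0 : ZMod 2) (Finset.mem_univ 0)]
    · rw [mul_zero, sgn_zero, one_smul, gpart_one, if_pos rfl, one_mul]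
    · intro π _ hπ
      rw [gpart_one, if_neg hπ, zero_mul, smul_zero]
  · intro t _ ht
    refine Finset.sum_eq_zero fun π _ => ?_
    rw [hTop i t, if_neg fun hh => ht hh.symm, gpart_zero, zero_mul, smul_zero]

lemma circMul_top_right {F G : I → I → ℤ → V} {a b : ℤ} (p : I → ZMod 2)
    (hF : MBd F a) (hG : MBd G b) (hTop : ∀ t j : I, G t j b = if t = j then 1 else 0)
    (i j : I) : circMul p F G i j (a + b) = F i j a := by
  rw [circMul_top p hF hG i j]
  rw [Finset.sum_eq_single_of_mem j (Finset.mem_univ j)]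
  · have hz : p j + p j = 0 := zmod2_add_self _
    have : ∀ π : ZMod 2, sgn ((p j + p j) * π) • (gpart π (F i j a) * G j j b)
        = gpart π (F i j a) := by
      intro π
      rw [hz, zero_mul, sgn_zero, one_smul, hTop j j, if_pos rfl, mul_one]
    rw [Finset.sum_congr rfl fun π _ => this π]
    exact gpart_sum _
  · intro t _ ht
    refine Finset.sum_eq_zero fun π _ => ?_
    rw [hTop t j, if_neg ht, mul_zero, smul_zero]

lemma circMul_add_left {F G X : I → I → ℤ → V} {a b : ℤ} (p : I → ZMod 2)
    (hF : MBd F a) (hG : MBd G a) (hX : MBd X b) (i j : I) (m : ℤ) :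
    circMul p (fun i j k => F i j k + G i j k) X i j m =
      circMul p F X i j m + circMul p G X i j m := by
  unfold circMul
  rw [← Finset.sum_add_distrib]
  refine Finset.sum_congr rfl fun t _ => ?_
  rw [← Finset.sum_add_distrib]
  refine Finset.sum_congr rfl fun π _ => ?_
  have he : (fun k => gpart (V := V) π (F i t k + G i t k)) =
      fun k => gpart π (F i t k) + gpart π (G i t k) := funext fun k => gpart_add _ _ _
  rw [he, pmul_add_left (hF.gpartBd π i t) (hG.gpartBd π i t) (fun k hk => hX t j k hk) m,
    smul_add]

lemma circMul_add_right {F X Y : I → I → ℤ → V} {a b : ℤ} (p : I → ZMod 2)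
    (hF : MBd F a) (hX : MBd X b) (hY : MBd Y b) (i j : I) (m : ℤ) :
    circMul p F (fun i j k => X i j k + Y i j k) i j m =
      circMul p F X i j m + circMul p F Y i j m := by
  unfold circMul
  rw [← Finset.sum_add_distrib]
  refine Finset.sum_congr rfl fun t _ => ?_
  rw [← Finset.sum_add_distrib]
  refine Finset.sum_congr rfl fun π _ => ?_
  rw [pmul_add_right (hF.gpartBd π i t) (fun k hk => hX t j k hk) (fun k hk => hY t j k hk) m,
    smul_add]

lemma circPow_bd {R : I → I → ℤ → V} (p : I → ZMod 2) (hR : MBd R 1) (n : ℕ) :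
    MBd (circPow p R n) (n : ℤ) := by
  induction n with
  | zero =>
    intro i j k hk
    simp only [circPow, idMat]
    rw [if_neg]
    rintro ⟨-, h⟩
    omega
  | succ n ih =>
    intro i j k hk
    show circMul p R (circPow p R n) i j k = 0
    exact circMul_bd p hR ih (by push_cast at hk ⊢; omega)

lemma circPow_top {R : I → I → ℤ → V} (p : I → ZMod 2) (hR : MBd R 1)
    (hTop : ∀ i j : I, R i j 1 = if i = j then 1 else 0) (n : ℕ) (i j : I) :
    circPow p R n i j (n : ℤ) = if i = j then 1 else 0 := by
  induction n generalizing i j with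
  | zero =>
    show (if i = j ∧ (0:ℤ) = 0 then (1:V) else 0) = if i = j then 1 else 0
    by_cases h : i = j <;> simp [h]
  | succ n ih =>
    show circMul p R (circPow p R n) i j ((n + 1 : ℕ) : ℤ) = _
    rw [show ((n + 1 : ℕ) : ℤ) = 1 + (n : ℤ) by push_cast; ring]
    rw [circMul_top_left p hR (circPow_bd p hR n) hTop i j]
    exact ih i j

end PDO
set_option linter.unusedSectionVars false

namespace PDO

variable {V : Type*} [DiffSuperAlg V]
variable {I : Type*} [Fintype I] [DecidableEq I]

lemma main_step (p : I → ZMod 2) (R R' : I → I → ℤ → V)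
    (hR1 : MBd R 1) (hR'1 : MBd R' 1)
    (hRt : ∀ i j : I, R i j 1 = if i = j then (1 : V) else 0)
    (hR't : ∀ i j : I, R' i j 1 = if i = j then (1 : V) else 0)
    (s₀ : ℕ) (hs : 1 ≤ s₀)
    (hag : ∀ i j : I, ∀ k : ℤ, 1 - (s₀ : ℤ) < k → R' i j k = R i j k) (n : ℕ) :
    (∀ i j : I, ∀ m : ℤ, (n : ℤ) - s₀ < m →
        circPow p R' n i j m = circPow p R n i j m) ∧
    (∀ i j : I, circPow p R' n i j ((n : ℤ) - s₀) =
        circPow p R n i j ((n : ℤ) - s₀) +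
          (n : ℂ) • (R' i j (1 - (s₀ : ℤ)) - R i j (1 - (s₀ : ℤ)))) := by
  induction n with
  | zero =>
    refine ⟨fun i j m _ => rfl, fun i j => ?_⟩
    show idMat i j ((0:ℕ) - (s₀:ℤ)) = idMat i j ((0:ℕ) - (s₀:ℤ)) + _
    simp
  | succ n ih =>
    have hEbd : MBd (fun i j k => R' i j k - R i j k) (1 - (s₀ : ℤ)) := by
      intro i j k hk
      by_cases h1 : (1 : ℤ) < k
      · simp only [hR1 i j k h1, hR'1 i j k h1, sub_zero]
      · simp only [hag i j k hk, sub_self]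
    have hE1 : MBd (fun i j k => R' i j k - R i j k) 1 := hEbd.mono (by omega)
    have hQbd : MBd (circPow p R n) (n : ℤ) := circPow_bd p hR1 n
    have hQ'bd : MBd (circPow p R' n) (n : ℤ) := circPow_bd p hR'1 n
    have hQdbd : MBd (fun i j k => circPow p R' n i j k - circPow p R n i j k)
        ((n : ℤ) - s₀) := by
      intro i j k hk
      simp only [ih.1 i j k hk, sub_self]
    have hQdn : MBd (fun i j k => circPow p R' n i j k - circPow p R n i j k) (n : ℤ) :=
      hQdbd.mono (by omega)
    have hQtop : ∀ t j : I, circPow p R n t j (n : ℤ) = if t = j then 1 else 0 :=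
      circPow_top p hR1 hRt n
    have hXY : MBd (fun i j k => circPow p R n i j k +
        (circPow p R' n i j k - circPow p R n i j k)) (n : ℤ) := by
      intro i j k hk
      simp [hQbd i j k hk, hQ'bd i j k hk]
    have hR'eq' : (fun i j k => R i j k + (R' i j k - R i j k)) = R' := by
      funext i j k; abel
    have hQ'eq' : (fun i j k => circPow p R n i j k +
        (circPow p R' n i j k - circPow p R n i j k)) = circPow p R' n := by
      funext i j k; abel
    have hdec : ∀ i j : I, ∀ m : ℤ, circPow p R' (n + 1) i j m =
        circMul p R (circPow p R n) i j m +
        circMul p R (fun i j k => circPow p R' n i j k - circPow p R n i j k) i j m +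
        (circMul p (fun i j k => R' i j k - R i j k) (circPow p R n) i j m +
         circMul p (fun i j k => R' i j k - R i j k)
           (fun i j k => circPow p R' n i j k - circPow p R n i j k) i j m) := by
      intro i j m
      calc circPow p R' (n + 1) i j m
          = circMul p (fun i j k => R i j k + (R' i j k - R i j k))
              (fun i j k => circPow p R n i j k +
                (circPow p R' n i j k - circPow p R n i j k)) i j m := by
            rw [hR'eq', hQ'eq']; rfl
        _ = _ := by
            rw [circMul_add_left p hR1 hE1 hXY i j m,
              circMul_add_right p hR1 hQbd hQdn i j m,
              circMul_add_right p hE1 hQbd hQdn i j m]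
    constructor
    · intro i j m hm
      have hm' : ((n : ℤ) + 1) - s₀ < m := by push_cast at hm; omega
      have h2 : circMul p R
          (fun i j k => circPow p R' n i j k - circPow p R n i j k) i j m = 0 :=
        circMul_bd p hR1 hQdbd (by omega)
      have h3 : circMul p (fun i j k => R' i j k - R i j k) (circPow p R n) i j m = 0 :=
        circMul_bd p hEbd hQbd (by omega)
      have h4 : circMul p (fun i j k => R' i j k - R i j k)
          (fun i j k => circPow p R' n i j k - circPow p R n i j k) i j m = 0 :=
        circMul_bd p hEbd hQdbd (by omega)
      rw [hdec i j m, h2, h3, h4]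
      show circMul p R (circPow p R n) i j m + 0 + (0 + 0) = circPow p R (n + 1) i j m
      rw [add_zero, add_zero, add_zero]
      rfl
    · intro i j
      set m : ℤ := ((n + 1 : ℕ) : ℤ) - s₀ with hmdef
      have h2 : circMul p R
          (fun i j k => circPow p R' n i j k - circPow p R n i j k) i j m =
          (n : ℂ) • (R' i j (1 - (s₀ : ℤ)) - R i j (1 - (s₀ : ℤ))) := by
        have hm : m = 1 + ((n : ℤ) - s₀) := by rw [hmdef]; push_cast; ring
        rw [hm, circMul_top_left p hR1 hQdbd hRt i j]
        show circPow p R' n i j ((n : ℤ) - s₀) - circPow p R n i j ((n : ℤ) - s₀) = _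
        rw [ih.2 i j]; abel
      have h3 : circMul p (fun i j k => R' i j k - R i j k) (circPow p R n) i j m =
          R' i j (1 - (s₀ : ℤ)) - R i j (1 - (s₀ : ℤ)) := by
        have hm : m = (1 - (s₀ : ℤ)) + (n : ℤ) := by rw [hmdef]; push_cast; ring
        rw [hm, circMul_top_right p hEbd hQbd hQtop i j]
      have h4 : circMul p (fun i j k => R' i j k - R i j k)
          (fun i j k => circPow p R' n i j k - circPow p R n i j k) i j m = 0 :=
        circMul_bd p hEbd hQdbd (by rw [hmdef]; push_cast; omega)
      rw [hdec i j m, h2, h3, h4]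
      show circMul p R (circPow p R n) i j m + _ + _ = circPow p R (n + 1) i j m + _
      have h1 : circMul p R (circPow p R n) i j m = circPow p R (n + 1) i j m := rfl
      rw [h1]
      have hc : ((n + 1 : ℕ) : ℂ) = (n : ℂ) + 1 := by push_cast; ring
      rw [hc, add_smul, one_smul]
      abel
end PDO
namespace PDO

variable {V : Type*} [DiffSuperAlg V]
variable {I : Type*} [Fintype I] [DecidableEq I]

/-- Coefficients of the `N`-th root, by strong recursion on the depth. -/
def rroot (p : I → ZMod 2) (N : ℕ) (M : I → I → ℤ → V) : ℕ → I → I → V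
  | 0 => fun i j => if i = j then 1 else 0
  | s + 1 => fun i j =>
      (N : ℂ)⁻¹ • (M i j ((N : ℤ) - ((s : ℤ) + 1)) -
        circPow p
          (fun i' j' k =>
            if h : 1 - (s : ℤ) ≤ k ∧ k ≤ 1 then rroot p N M (1 - k).toNat i' j' else 0)
          N i j ((N : ℤ) - ((s : ℤ) + 1)))
  termination_by s => s
  decreasing_by omega

/-- Truncated root candidate. -/
def Rt (p : I → ZMod 2) (N : ℕ) (M : I → I → ℤ → V) (s : ℕ) : I → I → ℤ → V :=
  fun i j k => if h : 1 - (s : ℤ) ≤ k ∧ k ≤ 1 then rroot p N M (1 - k).toNat i j else 0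

/-- The full root candidate. -/
def Rfull (p : I → ZMod 2) (N : ℕ) (M : I → I → ℤ → V) : I → I → ℤ → V :=
  fun i j k => if k ≤ 1 then rroot p N M (1 - k).toNat i j else 0

lemma rroot_zero (p : I → ZMod 2) (N : ℕ) (M : I → I → ℤ → V) :
    rroot p N M 0 = fun i j => if i = j then (1 : V) else 0 := by
  rw [rroot]

lemma rroot_succ (p : I → ZMod 2) (N : ℕ) (M : I → I → ℤ → V) (s : ℕ) (i j : I) :
    rroot p N M (s + 1) i j =
      (N : ℂ)⁻¹ • (M i j ((N : ℤ) - ((s : ℤ) + 1)) -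
        circPow p (Rt p N M s) N i j ((N : ℤ) - ((s : ℤ) + 1))) := by
  rw [rroot]
  rfl

lemma Rt_bd (p : I → ZMod 2) (N : ℕ) (M : I → I → ℤ → V) (s : ℕ) :
    MBd (Rt p N M s) 1 := by
  intro i j k hk
  rw [Rt, dif_neg]
  rintro ⟨-, h⟩; omega

lemma Rt_top (p : I → ZMod 2) (N : ℕ) (M : I → I → ℤ → V) (s : ℕ) (i j : I) :
    Rt p N M s i j 1 = if i = j then (1 : V) else 0 := by
  rw [Rt, dif_pos (by constructor <;> omega)]
  norm_num [rroot_zero]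

lemma Rfull_bd (p : I → ZMod 2) (N : ℕ) (M : I → I → ℤ → V) :
    MBd (Rfull p N M) 1 := by
  intro i j k hk
  rw [Rfull, if_neg (by omega)]

lemma Rfull_top (p : I → ZMod 2) (N : ℕ) (M : I → I → ℤ → V) (i j : I) :
    Rfull p N M i j 1 = if i = j then (1 : V) else 0 := by
  rw [Rfull, if_pos le_rfl]
  norm_num [rroot_zero]

lemma Rfull_monic (p : I → ZMod 2) (N : ℕ) (M : I → I → ℤ → V) :
    IsMonicMat (Rfull p N M) 1 :=
  ⟨Rfull_top p N M, Rfull_bd p N M⟩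

lemma exists_key (p : I → ZMod 2) (N : ℕ) (hN : 1 ≤ N) (M : I → I → ℤ → V)
    (hM : IsMonicMat M (N : ℤ)) (s : ℕ) (i j : I) :
    circPow p (Rfull p N M) N i j ((N : ℤ) - (s : ℤ)) = M i j ((N : ℤ) - (s : ℤ)) := by
  have hNC : (N : ℂ) ≠ 0 := by
    simp only [ne_eq, Nat.cast_eq_zero]; omega
  -- Step A : replace Rfull by Rt s
  have hagA : ∀ i j : I, ∀ k : ℤ, 1 - ((s + 1 : ℕ) : ℤ) < k →
      Rfull p N M i j k = Rt p N M s i j k := by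
    intro i j k hk
    push_cast at hk
    by_cases h1 : k ≤ 1
    · rw [Rfull, if_pos h1, Rt, dif_pos ⟨by omega, h1⟩]
    · rw [Rfull, if_neg h1, Rt, dif_neg]
      rintro ⟨-, h⟩; omega
  have hA := (main_step p (Rt p N M s) (Rfull p N M) (Rt_bd p N M s) (Rfull_bd p N M)
      (Rt_top p N M s) (Rfull_top p N M) (s + 1) (by omega) hagA N).1 i j
      ((N : ℤ) - (s : ℤ)) (by push_cast; omega)
  rw [hA]
  -- Step B : compute for the truncation
  cases s with
  | zero =>
    rw [show (N : ℤ) - ((0 : ℕ) : ℤ) = (N : ℤ) by push_cast; ring]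
    rw [circPow_top p (Rt_bd p N M 0) (Rt_top p N M 0) N i j, hM.1 i j]
  | succ s' =>
    have hagB : ∀ i j : I, ∀ k : ℤ, 1 - ((s' + 1 : ℕ) : ℤ) < k →
        Rt p N M (s' + 1) i j k = Rt p N M s' i j k := by
      intro i j k hk
      push_cast at hk
      by_cases h1 : k ≤ 1
      · rw [Rt, dif_pos ⟨by push_cast; omega, h1⟩, Rt, dif_pos ⟨by omega, h1⟩]
      · rw [Rt, dif_neg (by rintro ⟨-, h⟩; omega), Rt, dif_neg (by rintro ⟨-, h⟩; omega)]
    have hB := (main_step p (Rt p N M s') (Rt p N M (s' + 1)) (Rt_bd p N M s')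
        (Rt_bd p N M (s' + 1)) (Rt_top p N M s') (Rt_top p N M (s' + 1)) (s' + 1)
        (by omega) hagB N).2 i j
    have e1 : (N : ℤ) - ((s' + 1 : ℕ) : ℤ) = (N : ℤ) - (((s' : ℕ) : ℤ) + 1) := by push_cast; ring
    have hv1 : Rt p N M (s' + 1) i j (1 - ((s' + 1 : ℕ) : ℤ)) = rroot p N M (s' + 1) i j := by
      rw [Rt, dif_pos ⟨by push_cast; omega, by push_cast; omega⟩]
      congr 1
      push_cast; omega
    have hv2 : Rt p N M s' i j (1 - ((s' + 1 : ℕ) : ℤ)) = 0 := by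
      rw [Rt, dif_neg]
      rintro ⟨h, -⟩
      push_cast at h; omega
    rw [hv1, hv2, sub_zero, rroot_succ p N M s' i j, smul_smul, mul_inv_cancel₀ hNC, one_smul] at hB
    rw [e1] at hB ⊢
    rw [hB]
    abel

lemma rfull_pow (p : I → ZMod 2) (N : ℕ) (hN : 1 ≤ N) (M : I → I → ℤ → V)
    (hM : IsMonicMat M (N : ℤ)) : circPow p (Rfull p N M) N = M := by
  funext i j m
  rcases le_or_gt m (N : ℤ) with hm | hm
  · have := exists_key p N hN M hM ((N : ℤ) - m).toNat i j
    rw [show (N : ℤ) - (((N : ℤ) - m).toNat : ℤ) = m by omega] at this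
    exact this
  · rw [circPow_bd p (Rfull_bd p N M) N i j m hm, hM.2 i j m hm]

lemma roots_eq (p : I → ZMod 2) (N : ℕ) (hN : 1 ≤ N) (M : I → I → ℤ → V)
    (R1 R2 : I → I → ℤ → V) (h1 : IsMonicMat R1 1 ∧ circPow p R1 N = M)
    (h2 : IsMonicMat R2 1 ∧ circPow p R2 N = M) : R1 = R2 := by
  have hNC : (N : ℂ) ≠ 0 := by
    simp only [ne_eq, Nat.cast_eq_zero]; omega
  have key : ∀ s : ℕ, ∀ k : ℤ, 1 - (s : ℤ) ≤ k → ∀ i j : I, R1 i j k = R2 i j k := by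
    intro s
    induction s with
    | zero =>
      intro k hk i j
      push_cast at hk
      rcases eq_or_lt_of_le hk with h | h
      · rw [← h, h1.1.1 i j, h2.1.1 i j]
      · rw [h1.1.2 i j k h, h2.1.2 i j k h]
    | succ s ihs =>
      intro k hk i j
      by_cases hk' : 1 - (s : ℤ) ≤ k
      · exact ihs k hk' i j
      have hks : k = 1 - ((s : ℤ) + 1) := by push_cast at hk; omega
      have hag : ∀ i j : I, ∀ k : ℤ, 1 - ((s + 1 : ℕ) : ℤ) < k → R1 i j k = R2 i j k := by
        intro i j k hkk
        exact ihs k (by push_cast at hkk ⊢; omega) i j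
      have hmain := (main_step p R2 R1 h2.1.2 h1.1.2 h2.1.1 h1.1.1 (s + 1) (by omega)
        hag N).2 i j
      rw [h1.2, h2.2] at hmain
      have hz : (N : ℂ) • (R1 i j (1 - ((s + 1 : ℕ) : ℤ)) - R2 i j (1 - ((s + 1 : ℕ) : ℤ))) = 0 :=
        (left_eq_add.mp hmain)
      have hd : R1 i j (1 - ((s + 1 : ℕ) : ℤ)) - R2 i j (1 - ((s + 1 : ℕ) : ℤ)) = 0 := by
        have h' : ((N : ℂ)⁻¹ * (N : ℂ)) •
            (R1 i j (1 - ((s + 1 : ℕ) : ℤ)) - R2 i j (1 - ((s + 1 : ℕ) : ℤ))) = 0 := by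
          rw [mul_smul, hz, smul_zero]
        rwa [inv_mul_cancel₀ hNC, one_smul] at h'
      have heq := sub_eq_zero.mp hd
      rw [show k = 1 - ((s + 1 : ℕ) : ℤ) by push_cast at hks ⊢; omega]
      exact heq
  funext i j k
  by_cases hk : k ≤ 1
  · exact key (1 - k).toNat k (by omega) i j
  · push_neg at hk
    rw [h1.1.2 i j k hk, h2.1.2 i j k hk]

end PDO
/-- A monic matrix pseudo-differential operator of order `N ≥ 1` has a
unique `N`-th root with respect to the `∘`-product which is monic of order `1`. -/
theorem circ_root_exists_unique (V : Type*) [DiffSuperAlg V] {I : Type*} [Fintype I]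
    [DecidableEq I] (p : I → ZMod 2) (N : ℕ) (hN : 1 ≤ N)
    (M : I → I → ℤ → V) (hM : PDO.IsMonicMat M (N : ℤ)) :
    ∃! R : I → I → ℤ → V, PDO.IsMonicMat R 1 ∧ PDO.circPow p R N = M := by
  refine ⟨PDO.Rfull p N M, ⟨PDO.Rfull_monic p N M, PDO.rfull_pow p N hN M hM⟩, ?_⟩
  intro y hy
  exact PDO.roots_eq p N hN M y (PDO.Rfull p N M) hy
    ⟨PDO.Rfull_monic p N M, PDO.rfull_pow p N hN M hM⟩
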